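/- In the group B_• presented by the parenthesized braid relations, the identity f · ∂z = ∂^{1+n}(z) · f holds whenever f is a special Thompson element of length n and z is any element, where ∂ is the shift endomorphism; in particular a₁·∂z = ∂²z·a₁ for all z. -/

import Mathlib

namespace ParenBraid

/-- Free-group letter for `σ_i`. -/
def S (i : ℕ+) : FreeGroup (ℕ+ ⊕ ℕ+) := FreeGroup.of (Sum.inl i)

/-- Free-group letter for `a_i`. -/
def A (i : ℕ+) : FreeGroup (ℕ+ ⊕ ℕ+) := FreeGroup.of (Sum.inr i)

/-- The parenthesized braid relations `R_•`, as relators: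
for `j ≥ i+2`: `σ_iσ_j = σ_jσ_i`, `σ_ia_j = a_jσ_i`, `a_ia_{j-1} = a_ja_i`,
`a_iσ_{j-1} = σ_ja_i`; and `σ_iσ_{i+1}σ_i = σ_{i+1}σ_iσ_{i+1}`,
`σ_{i+1}σ_ia_{i+1} = a_iσ_i`, `σ_iσ_{i+1}a_i = a_{i+1}σ_i`. -/
def rels : Set (FreeGroup (ℕ+ ⊕ ℕ+)) :=
  {w | ∃ i j : ℕ+, i + 2 ≤ j ∧
      (w = S i * S j * (S j * S i)⁻¹ ∨
       w = S i * A j * (A j * S i)⁻¹ ∨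
       w = A i * A (j - 1) * (A j * A i)⁻¹ ∨
       w = A i * S (j - 1) * (S j * A i)⁻¹)} ∪
  {w | ∃ i : ℕ+,
      w = S i * S (i + 1) * S i * (S (i + 1) * S i * S (i + 1))⁻¹ ∨
      w = S (i + 1) * S i * A (i + 1) * (A i * S i)⁻¹ ∨
      w = S i * S (i + 1) * A i * (A (i + 1) * S i)⁻¹}

/-- The group `B_•` of parenthesized braids, by its presentation. -/
abbrev Bp := PresentedGroup rels

/-- The generator `σ_i` of `B_•`. -/
def σ' (i : ℕ+) : Bp := PresentedGroup.of (Sum.inl i)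

/-- The generator `a_i` of `B_•`. -/
def a' (i : ℕ+) : Bp := PresentedGroup.of (Sum.inr i)

lemma mk_rel {r : FreeGroup (ℕ+ ⊕ ℕ+)} (hr : r ∈ rels) : (QuotientGroup.mk r : Bp) = 1 := by
  rw [QuotientGroup.eq_one_iff]
  exact Subgroup.subset_normalClosure hr

lemma mk_S (i : ℕ+) : (QuotientGroup.mk (S i) : Bp) = σ' i := rfl
lemma mk_A (i : ℕ+) : (QuotientGroup.mk (A i) : Bp) = a' i := rfl

lemma genA {i j : ℕ+} (h : i + 1 ≤ j) : a' i * a' j = a' (j + 1) * a' i := by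
  have h2 : i + 2 ≤ j + 1 := by
    rw [show (2 : ℕ+) = 1 + 1 from rfl, ← add_assoc]
    exact add_le_add_left h 1
  have hr : A i * A (j + 1 - 1) * (A (j + 1) * A i)⁻¹ ∈ rels :=
    Or.inl ⟨i, j + 1, h2, Or.inr (Or.inr (Or.inl rfl))⟩
  have := mk_rel hr
  rw [PNat.add_sub] at this
  rw [QuotientGroup.mk_mul, QuotientGroup.mk_mul, QuotientGroup.mk_inv, QuotientGroup.mk_mul,
    mk_A, mk_A, mk_A, mul_inv_eq_one] at this
  exact this

lemma genS {i j : ℕ+} (h : i + 1 ≤ j) : a' i * σ' j = σ' (j + 1) * a' i := by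
  have h2 : i + 2 ≤ j + 1 := by
    rw [show (2 : ℕ+) = 1 + 1 from rfl, ← add_assoc]
    exact add_le_add_left h 1
  have hr : A i * S (j + 1 - 1) * (S (j + 1) * A i)⁻¹ ∈ rels :=
    Or.inl ⟨i, j + 1, h2, Or.inr (Or.inr (Or.inr rfl))⟩
  have := mk_rel hr
  rw [PNat.add_sub] at this
  rw [QuotientGroup.mk_mul, QuotientGroup.mk_mul, QuotientGroup.mk_inv, QuotientGroup.mk_mul,
    mk_A, mk_S, mk_S, mul_inv_eq_one] at this
  exact this

lemma head_bound : ∀ (l : List ℕ+),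
    (∀ k : ℕ, k + 1 < l.length → l.getD k 1 ≤ l.getD (k + 1) 1 + 1) →
    (l ≠ [] → l.getLast? = some 1) →
    ∀ i : ℕ+, l.head? = some i → (i : ℕ) ≤ l.length := by
  intro l
  induction l with
  | nil => simp
  | cons i rest ih =>
    intro hchain hlast x hx
    rw [List.head?_cons, Option.some_inj] at hx
    subst hx
    cases rest with
    | nil =>
      have h1 := hlast (by simp)
      simp [List.getLast?] at h1
      simp [h1]
    | cons j rest' =>
      have h0 := hchain 0 (by simp)
      simp only [List.getD_cons_zero, List.getD_cons_succ] at h0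
      have hj : (j : ℕ) ≤ (j :: rest').length := by
        apply ih
        · intro k hk
          have := hchain (k + 1) (by simp at hk ⊢; omega)
          simpa using this
        · intro _
          simpa [List.getLast?_cons_cons] using hlast (by simp)
        · rfl
      have h0' : (i : ℕ) ≤ (j : ℕ) + 1 := by
        rw [← PNat.coe_le_coe] at h0
        simpa using h0
      simp only [List.length_cons] at hj ⊢
      omega

/-- `j` shifted up by a natural number. -/
def pn (j : ℕ+) (m : ℕ) : ℕ+ := ⟨(j : ℕ) + m, Nat.lt_of_lt_of_le j.pos (Nat.le_add_right _ _)⟩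

lemma pn_zero (j : ℕ+) : pn j 0 = j := rfl

lemma pn_succ (j : ℕ+) (m : ℕ) : pn j (m + 1) = pn j m + 1 := rfl

section
variable (D : Bp →* Bp) (hDs : ∀ i : ℕ+, D (σ' i) = σ' (i + 1))
  (hDa : ∀ i : ℕ+, D (a' i) = a' (i + 1))

include hDs hDa

omit hDa in
lemma iterS (m : ℕ) (j : ℕ+) : (⇑D)^[m] (σ' j) = σ' (pn j m) := by
  induction m with
  | zero => rfl
  | succ m ih => rw [Function.iterate_succ_apply', ih, hDs, pn_succ]

omit hDs in
lemma iterA' (m : ℕ) (j : ℕ+) : (⇑D)^[m] (a' j) = a' (pn j m) := by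
  induction m with
  | zero => rfl
  | succ m ih => rw [Function.iterate_succ_apply', ih, hDa, pn_succ]

lemma key (i : ℕ+) (m : ℕ) (him : (i : ℕ) ≤ m) (z : Bp) :
    a' i * (⇑D)^[m] z = (⇑D)^[m + 1] z * a' i := by
  have hz : z ∈ Subgroup.closure (Set.range (PresentedGroup.of (rels := rels))) := by
    rw [PresentedGroup.closure_range_of]; trivial
  have hle : ∀ j : ℕ+, i + 1 ≤ pn j m := by
    intro j
    rw [← PNat.coe_le_coe]
    show (i : ℕ) + 1 ≤ (j : ℕ) + m
    have := j.pos
    omega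
  induction hz using Subgroup.closure_induction with
  | mem x hx =>
    obtain ⟨g, rfl⟩ := hx
    cases g with
    | inl j =>
      show a' i * (⇑D)^[m] (σ' j) = (⇑D)^[m + 1] (σ' j) * a' i
      rw [iterS D hDs, iterS D hDs, show pn j (m + 1) = pn j m + 1 from rfl]
      exact genS (hle j)
    | inr j =>
      show a' i * (⇑D)^[m] (a' j) = (⇑D)^[m + 1] (a' j) * a' i
      rw [iterA' D hDa, iterA' D hDa, show pn j (m + 1) = pn j m + 1 from rfl]
      exact genA (hle j)
  | one => simp
  | mul x y hx hy ihx ihy =>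
    rw [iterate_map_mul, iterate_map_mul, ← mul_assoc, mul_assoc _ _ (a' i)]
    rw [mul_assoc, ← mul_assoc (a' i), ihx, mul_assoc, ihy, ← mul_assoc]
  | inv x hx ihx =>
    rw [iterate_map_inv, iterate_map_inv]
    have hX : (⇑D)^[m] x = (a' i)⁻¹ * ((⇑D)^[m + 1] x * a' i) := by
      rw [← ihx]; group
    rw [hX]; group

lemma main_aux (l : List ℕ+)
    (hchain : ∀ k : ℕ, k + 1 < l.length → l.getD k 1 ≤ l.getD (k + 1) 1 + 1)
    (hlast : l ≠ [] → l.getLast? = some 1) (z : Bp) :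
    (l.map a').prod * D z = (⇑D)^[l.length + 1] z * (l.map a').prod := by
  induction l with
  | nil => simp
  | cons i rest ih =>
    have hch' : ∀ k : ℕ, k + 1 < rest.length → rest.getD k 1 ≤ rest.getD (k + 1) 1 + 1 := by
      intro k hk
      have := hchain (k + 1) (by simp; omega)
      simpa using this
    have hl' : rest ≠ [] → rest.getLast? = some 1 := by
      intro h
      cases rest with
      | nil => exact absurd rfl h
      | cons b t => simpa [List.getLast?_cons_cons] using hlast (by simp)
    have hbound : (i : ℕ) ≤ rest.length + 1 := by
      have := head_bound (i :: rest) hchain hlast i rfl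
      simpa using this
    simp only [List.map_cons, List.prod_cons, List.length_cons, mul_assoc]
    rw [ih hch' hl', ← mul_assoc (a' i),
      key D hDs hDa i (rest.length + 1) hbound z, mul_assoc]

end

/-- In `B_•`, for every special Thompson element `f = a_{i₁}⋯a_{i_n}` (so
`i_{k+1} ≥ i_k − 1` and `i_n = 1` when `n ≥ 1`) and every element `z`, one has
`f · ∂z = ∂^{1+n}(z) · f`, where `∂` is the shift endomorphism characterized by
`∂σ_i = σ_{i+1}` and `∂a_i = a_{i+1}`. In particular `a₁·∂z = ∂²z·a₁`. -/
theorem special_shift_comm (D : Bp →* Bp)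
    (hDs : ∀ i : ℕ+, D (σ' i) = σ' (i + 1))
    (hDa : ∀ i : ℕ+, D (a' i) = a' (i + 1))
    (n : ℕ) (l : List ℕ+) (hlen : l.length = n)
    (hchain : ∀ k : ℕ, k + 1 < l.length → l.getD k 1 ≤ l.getD (k + 1) 1 + 1)
    (hlast : l ≠ [] → l.getLast? = some 1)
    (z : Bp) :
    (l.map a').prod * D z = (⇑D)^[1 + n] z * (l.map a').prod := by
  subst hlen
  rw [Nat.add_comm 1 l.length]
  exact main_aux D hDs hDa l hchain hlast z

end ParenBraid
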